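/- arXiv:1008.2293 — 2 statements merged into one kernel-verified Lean document; each statement's English description precedes it below -/
import Mathlib

section
/- For 0 < ℓ ≤ 1/2, the function θ ↦ e^{−πθ/(2ℓ)}·sin θ is monotonically decreasing on the interval [ℓ, π−ℓ], and its value at θ = ℓ is at most ℓ. In particular e^{−πθ/(2ℓ)} sin θ ≤ ℓ for all θ ∈ [ℓ, π−ℓ]. -/
open Real Set

/-- For `0 < ℓ ≤ 1/2`, the function `θ ↦ e^{−πθ/(2ℓ)}·sin θ` is decreasing on
`[ℓ, π−ℓ]`, its value at `θ = ℓ` is at most `ℓ`, and hence it is bounded by `ℓ`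
on the whole interval. -/
theorem exp_sine_bound (ℓ : ℝ) (hℓ0 : 0 < ℓ) (hℓ : ℓ ≤ 1 / 2) :
    AntitoneOn (fun θ : ℝ => Real.exp (-π * θ / (2 * ℓ)) * Real.sin θ) (Icc ℓ (π - ℓ)) ∧
    Real.exp (-π * ℓ / (2 * ℓ)) * Real.sin ℓ ≤ ℓ ∧
    (∀ θ ∈ Icc ℓ (π - ℓ), Real.exp (-π * θ / (2 * ℓ)) * Real.sin θ ≤ ℓ) := by
  have hπ := Real.pi_gt_three
  have h2ℓ : (0:ℝ) < 2 * ℓ := by linarith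
  have hd : ∀ x : ℝ, HasDerivAt (fun θ : ℝ => Real.exp (-π * θ / (2 * ℓ)) * Real.sin θ)
      (Real.exp (-π * x / (2 * ℓ)) * (Real.cos x - π / (2 * ℓ) * Real.sin x)) x := by
    intro x
    have h1 : HasDerivAt (fun θ : ℝ => -π * θ / (2 * ℓ)) (-π / (2 * ℓ)) x := by
      simpa using ((hasDerivAt_id x).const_mul (-π)).div_const (2 * ℓ)
    have h2 : HasDerivAt (fun θ : ℝ => Real.exp (-π * θ / (2 * ℓ)) * Real.sin θ)
        (Real.exp (-π * x / (2 * ℓ)) * (-π / (2 * ℓ)) * Real.sin x + Real.exp (-π * x / (2 * ℓ)) * Real.cos x) x :=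
      (h1.exp).mul (Real.hasDerivAt_sin x)
    convert h2 using 1
    ring
  have key : AntitoneOn (fun θ : ℝ => Real.exp (-π * θ / (2 * ℓ)) * Real.sin θ)
      (Icc ℓ (π - ℓ)) := by
    apply antitoneOn_of_deriv_nonpos (convex_Icc _ _)
    · exact Continuous.continuousOn (by continuity)
    · intro x hx
      exact (hd x).differentiableAt.differentiableWithinAt
    · intro x hx
      rw [interior_Icc, mem_Ioo] at hx
      rw [(hd x).deriv]
      have hx0 : 0 < x := lt_trans hℓ0 hx.1
      have hxπ : x < π := by linarith [hx.2]
      have hsin : Real.cos x - π / (2 * ℓ) * Real.sin x ≤ 0 := by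
        rcases le_or_gt x (π / 2) with hle | hgt
        · have hj : 2 / π * x ≤ Real.sin x := Real.mul_le_sin hx0.le hle
          have hc : Real.cos x ≤ 1 := Real.cos_le_one x
          have : (1:ℝ) ≤ π / (2 * ℓ) * (2 / π * x) := by
            rw [div_mul_eq_mul_div, div_mul_eq_mul_div, mul_comm]
            rw [le_div_iff₀ h2ℓ, div_mul_eq_mul_div, le_div_iff₀ Real.pi_pos]
            have hxℓ : ℓ ≤ x := hx.1.le
            nlinarith
          have hmul : π / (2 * ℓ) * (2 / π * x) ≤ π / (2 * ℓ) * Real.sin x :=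
            mul_le_mul_of_nonneg_left hj (by positivity)
          linarith
        · have hc : Real.cos x ≤ 0 := Real.cos_nonpos_of_pi_div_two_le_of_le hgt.le
            (by linarith)
          have hs : 0 ≤ Real.sin x := Real.sin_nonneg_of_nonneg_of_le_pi hx0.le hxπ.le
          have : 0 ≤ π / (2 * ℓ) * Real.sin x := by positivity
          linarith
      have : 0 ≤ Real.exp (-π * x / (2 * ℓ)) := (Real.exp_pos _).le
      exact mul_nonpos_of_nonneg_of_nonpos this hsin
  have hval : Real.exp (-π * ℓ / (2 * ℓ)) * Real.sin ℓ ≤ ℓ := by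
    have hexp : Real.exp (-π * ℓ / (2 * ℓ)) ≤ 1 := by
      rw [Real.exp_le_one_iff]
      apply div_nonpos_of_nonpos_of_nonneg _ h2ℓ.le
      nlinarith [Real.pi_pos]
    have hsin : Real.sin ℓ ≤ ℓ := by
      rcases Real.sin_lt hℓ0 with h
      exact h.le
    have hsin0 : 0 ≤ Real.sin ℓ := Real.sin_nonneg_of_nonneg_of_le_pi hℓ0.le (by linarith)
    calc Real.exp (-π * ℓ / (2 * ℓ)) * Real.sin ℓ ≤ 1 * Real.sin ℓ :=
          mul_le_mul_of_nonneg_right hexp hsin0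
      _ = Real.sin ℓ := one_mul _
      _ ≤ ℓ := hsin
  refine ⟨key, hval, fun θ hθ => ?_⟩
  have hℓmem : ℓ ∈ Icc ℓ (π - ℓ) := ⟨le_refl _, by linarith⟩
  exact (key hℓmem hθ hθ.1).trans hval
end

section
/- Let f be holomorphic on the annulus {R < |w| < 1} (0 < R < e^{−2π}). Write f = f₊ + a₀ + f₋ where a₀ + f₊ is the Cauchy integral of f over the circle |w| = e^{−π} (holomorphic in |w| < e^{−π}, with a₀ the mean value of f on the circle, f₊(0) = 0), and f₋ is the Cauchy integral over an inner circle (holomorphic in |w| > R, vanishing at ∞). Then there is a universal constant C such that |f₊(w)| ≤ C·|w|·max_{|w'| = e^{−π}} |f(w')| for all |w| ≤ e^{−2π}. -/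
open Real Complex Metric

/-- Norm of the Cauchy difference kernel. -/
lemma kernel_abs {z w : ℂ} (hz : z ≠ 0) (hzw : z ≠ w) :
    ‖(z - w)⁻¹ - z⁻¹‖ =
      ‖w‖ / (‖z - w‖ * ‖z‖) := by
  rw [inv_sub_inv (sub_ne_zero.2 hzw) hz, sub_sub_cancel, norm_div, norm_mul]

/-- Cauchy difference formula for a function holomorphic on a disc. -/
lemma cauchy_diff {g : ℂ → ℂ} {r ρ : ℝ} {w : ℂ} (h0 : 0 < ρ) (hρr : ρ < r)
    (hg : DifferentiableOn ℂ g (ball 0 r)) (hw : ‖w‖ < ρ) :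
    (∮ z in C(0, ρ), ((z - w)⁻¹ - z⁻¹) * g z)
      = (2 * π * Complex.I) * (g w - g 0) := by
  have hsub : closedBall (0:ℂ) ρ ⊆ ball 0 r := closedBall_subset_ball hρr
  have hdc : DiffContOnCl ℂ g (ball 0 ρ) :=
    ⟨hg.mono (ball_subset_ball hρr.le),
      hg.continuousOn.mono (closure_ball_subset_closedBall.trans hsub)⟩
  have hw' : w ∈ ball (0:ℂ) ρ := by
    simpa [mem_ball_zero_iff] using hw
  have h0' : (0:ℂ) ∈ ball (0:ℂ) ρ := mem_ball_self h0
  have h1 := hdc.circleIntegral_sub_inv_smul hw'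
  have h2 := hdc.circleIntegral_sub_inv_smul h0'
  simp only [sub_zero] at h2
  have hgc : ContinuousOn g (sphere 0 ρ) :=
    hg.continuousOn.mono (sphere_subset_closedBall.trans hsub)
  have habs : ∀ z ∈ sphere (0:ℂ) ρ, ‖z‖ = ρ := by
    intro z hz
    simpa using (mem_sphere_zero_iff_norm.1 hz)
  have hi1 : CircleIntegrable (fun z => (z - w)⁻¹ * g z) 0 ρ := by
    refine ContinuousOn.circleIntegrable h0.le ?_
    refine ContinuousOn.mul (ContinuousOn.inv₀ (continuousOn_id.sub continuousOn_const) ?_) hgc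
    intro z hz
    refine sub_ne_zero.2 fun h => ?_
    rw [h] at hz
    exact absurd (habs w hz) (ne_of_lt hw)
  have hi2 : CircleIntegrable (fun z => z⁻¹ * g z) 0 ρ := by
    refine ContinuousOn.circleIntegrable h0.le ?_
    refine ContinuousOn.mul (ContinuousOn.inv₀ continuousOn_id ?_) hgc
    intro z hz h
    rw [h] at hz
    have h4 := habs 0 hz
    rw [norm_zero] at h4
    exact absurd h4.symm (ne_of_gt h0)
  calc (∮ z in C(0, ρ), ((z - w)⁻¹ - z⁻¹) * g z)
      = ∮ z in C(0, ρ), ((z - w)⁻¹ * g z - z⁻¹ * g z) := by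
        simp only [sub_mul]
    _ = (∮ z in C(0, ρ), (z - w)⁻¹ * g z) - ∮ z in C(0, ρ), z⁻¹ * g z :=
        circleIntegral.integral_sub hi1 hi2
    _ = (2 * π * Complex.I) * (g w - g 0) := by
        rw [show (fun z => (z - w)⁻¹ * g z) = (fun z => (z - w)⁻¹ • g z) from rfl] at *
        rw [h1]
        rw [show (fun z => z⁻¹ * g z) = (fun z => z⁻¹ • g z) from rfl]
        rw [h2]
        simp [smul_eq_mul]; ring

/-- Vanishing of the Cauchy difference integral for a function holomorphic
outside a disc and tending to `0` at infinity. -/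
lemma ext_zero {g : ℂ → ℂ} {R ρ : ℝ} {w : ℂ} (hR : 0 < R) (hRρ : R < ρ)
    (hw : ‖w‖ < ρ)
    (hg : DifferentiableOn ℂ g {z : ℂ | R < ‖z‖})
    (h0 : Filter.Tendsto g (Filter.comap (fun z : ℂ => ‖z‖) Filter.atTop) (nhds 0)) :
    (∮ z in C(0, ρ), ((z - w)⁻¹ - z⁻¹) * g z) = 0 := by
  have hρ0 : 0 < ρ := hR.trans hRρ
  set U : Set ℂ := {z : ℂ | R < ‖z‖ ∧ ‖w‖ < ‖z‖} with hU
  have hUopen : IsOpen U := by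
    rw [hU, Set.setOf_and]
    exact (isOpen_lt continuous_const continuous_norm).inter
      (isOpen_lt continuous_const continuous_norm)
  have hKg : DifferentiableOn ℂ (fun z => ((z - w)⁻¹ - z⁻¹) * g z) U := by
    have h1 : ∀ z ∈ U, z - w ≠ 0 := by
      intro z hz h
      rw [sub_eq_zero] at h
      have h5 : ‖w‖ < ‖z‖ := hz.2
      rw [h] at h5
      exact lt_irrefl _ h5
    have h2 : ∀ z ∈ U, z ≠ 0 := by
      intro z hz h
      have h5 : R < ‖z‖ := hz.1
      rw [h, norm_zero] at h5
      exact absurd h5 (not_lt.2 hR.le)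
    exact (((differentiableOn_id.sub (differentiableOn_const w)).inv h1).sub
      (differentiableOn_id.inv h2)).mul (hg.mono fun z hz => hz.1)
  have hmemU : ∀ z : ℂ, ρ ≤ ‖z‖ → z ∈ U :=
    fun z hz => ⟨lt_of_lt_of_le hRρ hz, lt_of_lt_of_le hw hz⟩
  have step : ∀ S : ℝ, ρ ≤ S →
      (∮ z in C(0, S), ((z - w)⁻¹ - z⁻¹) * g z)
        = ∮ z in C(0, ρ), ((z - w)⁻¹ - z⁻¹) * g z := by
    intro S hS
    refine Complex.circleIntegral_eq_of_differentiable_on_annulus_off_countable hρ0 hS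
      Set.countable_empty (hKg.continuousOn.mono ?_) (fun z hz => ?_)
    · intro z hz
      refine hmemU z ?_
      have := hz.2
      rw [mem_ball_zero_iff, not_lt] at this
      exact this
    · refine hKg.differentiableAt (hUopen.mem_nhds (hmemU z ?_))
      have := hz.1.2
      rw [mem_closedBall_zero_iff, not_le] at this
      exact this.le
  set I₀ := ∮ z in C(0, ρ), ((z - w)⁻¹ - z⁻¹) * g z with hI₀
  have claim : ∀ ε : ℝ, 0 < ε → ‖I₀‖ ≤ (2 * π * (‖w‖ + 1)) * ε := by
    intro ε hε
    have hev : ∀ᶠ y in Filter.atTop, ∀ z : ℂ, ‖z‖ = y →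
        ‖g z‖ < ε := by
      have h := Metric.tendsto_nhds.1 h0 ε hε
      rw [Filter.eventually_comap] at h
      refine h.mono fun y hy z hz => ?_
      simpa [dist_zero_right] using hy z hz
    obtain ⟨A, hA⟩ := Filter.eventually_atTop.1 hev
    set S : ℝ := max (max A ρ) (‖w‖ + 1) with hSdef
    have hSρ : ρ ≤ S := le_max_of_le_left (le_max_right _ _)
    have hSA : A ≤ S := le_max_of_le_left (le_max_left _ _)
    have hSw : ‖w‖ + 1 ≤ S := le_max_right _ _
    have hS0 : 0 < S := lt_of_lt_of_le hρ0 hSρ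
    have hbd : ∀ z ∈ sphere (0:ℂ) S,
        ‖((z - w)⁻¹ - z⁻¹) * g z‖ ≤ (‖w‖ / S) * ε := by
      intro z hz
      have hzS : ‖z‖ = S := by
        simpa using mem_sphere_zero_iff_norm.1 hz
      have hz0 : z ≠ 0 := by
        intro h; rw [h, norm_zero] at hzS; exact absurd hzS.symm (ne_of_gt hS0)
      have hzw : z ≠ w := by
        intro h
        rw [← h] at hSw
        rw [hzS] at hSw
        linarith
      have hzw1 : 1 ≤ ‖z - w‖ := by
        have h5 := norm_sub_norm_le z w
        rw [hzS] at h5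
        linarith
      rw [norm_mul, kernel_abs hz0 hzw, hzS]
      have h1 : ‖w‖ / (‖z - w‖ * S) ≤ ‖w‖ / S := by
        refine div_le_div_of_nonneg_left (norm_nonneg w) hS0 ?_
        nlinarith
      have h2 : ‖g z‖ ≤ ε := (hA S hSA z hzS).le
      exact mul_le_mul h1 h2 (norm_nonneg _) (by positivity)
    have hIb := circleIntegral.norm_integral_le_of_norm_le_const hS0.le hbd
    rw [step S hSρ] at hIb
    have hS' : 2 * π * S * (‖w‖ / S * ε) = 2 * π * ‖w‖ * ε := by
      have hSne : S ≠ 0 := ne_of_gt hS0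
      field_simp
    rw [hS'] at hIb
    refine hIb.trans ?_
    nlinarith [Real.pi_pos, norm_nonneg w, hε.le]
  have hnn : ‖I₀‖ ≤ 0 := by
    refine le_of_forall_pos_le_add fun ε hε => ?_
    have hc : 0 < 2 * π * (‖w‖ + 1) + 1 := by
      nlinarith [Real.pi_pos, norm_nonneg w]
    have h := claim (ε / (2 * π * (‖w‖ + 1) + 1)) (by positivity)
    have h2 : (2 * π * (‖w‖ + 1)) * (ε / (2 * π * (‖w‖ + 1) + 1))
        ≤ (2 * π * (‖w‖ + 1) + 1) * (ε / (2 * π * (‖w‖ + 1) + 1)) := by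
      apply mul_le_mul_of_nonneg_right (by linarith) (by positivity)
    have h3 : (2 * π * (‖w‖ + 1) + 1) * (ε / (2 * π * (‖w‖ + 1) + 1)) = ε := by
      field_simp
    linarith
  rw [← norm_le_zero_iff]
  exact hnn

/-- Laurent decomposition estimate on the annulus `{R < |w| < 1}`, `R < e^{−2π}`:
writing `f = f₊ + a₀ + f₋` with `f₊` holomorphic in `|w| < e^{−π}`, `f₊(0) = 0`,
`a₀` the mean value of `f` on `|w| = e^{−π}`, and `f₋` holomorphic in `|w| > R`
vanishing at `∞`, there is a universal constant `C` with
`|f₊(w)| ≤ C·|w|·max_{|w'| = e^{−π}} |f(w')|` for `|w| ≤ e^{−2π}`. -/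
theorem laurent_positive_part_estimate :
    ∃ C > 0, ∀ (R : ℝ) (f fp fm : ℂ → ℂ) (a₀ : ℂ),
      0 < R → R < Real.exp (-2 * π) →
      DifferentiableOn ℂ f {w : ℂ | R < ‖w‖ ∧ ‖w‖ < 1} →
      DifferentiableOn ℂ fp (ball 0 (Real.exp (-π))) →
      fp 0 = 0 →
      DifferentiableOn ℂ fm {w : ℂ | R < ‖w‖} →
      Filter.Tendsto fm (Filter.comap (fun w : ℂ => ‖w‖) Filter.atTop) (nhds 0) →
      a₀ = (2 * π)⁻¹ • ∫ t in (0:ℝ)..(2 * π),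
              f (Real.exp (-π) * Complex.exp (t * Complex.I)) →
      (∀ w : ℂ, R < ‖w‖ → ‖w‖ < Real.exp (-π) →
          f w = fp w + a₀ + fm w) →
      ∀ (M : ℝ), (∀ w' : ℂ, ‖w'‖ = Real.exp (-π) → ‖f w'‖ ≤ M) →
      ∀ w : ℂ, ‖w‖ ≤ Real.exp (-2 * π) →
        ‖fp w‖ ≤ C * ‖w‖ * M := by
  have hpi := Real.pi_pos
  have h12 : Real.exp (-2 * π) < Real.exp (-π) := Real.exp_lt_exp.2 (by linarith)
  have h1pos : (0:ℝ) < Real.exp (-2 * π) := Real.exp_pos _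
  have h2pos : (0:ℝ) < Real.exp (-π) := Real.exp_pos _
  have h2lt1 : Real.exp (-π) < 1 := by
    have h := Real.exp_lt_exp.2 (show -π < 0 by linarith)
    rwa [Real.exp_zero] at h
  refine ⟨(Real.exp (-π) - Real.exp (-2 * π))⁻¹, inv_pos.2 (by linarith), ?_⟩
  intro R f fp fm a₀ hR hRr hf hfp hfp0 hfm hfm0 _ha₀ hdec M hM w hw
  set r₁ := Real.exp (-2 * π) with hr₁
  set r₂ := Real.exp (-π) with hr₂
  set ρ := (r₁ + r₂) / 2 with hρdef
  have hρ1 : r₁ < ρ := by rw [hρdef]; linarith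
  have hρ2 : ρ < r₂ := by rw [hρdef]; linarith
  have hρ0 : (0:ℝ) < ρ := h1pos.trans hρ1
  have hwρ : ‖w‖ < ρ := lt_of_le_of_lt hw hρ1
  have hM0 : 0 ≤ M := by
    have h := hM ((r₂ : ℝ) : ℂ) (by rw [Complex.norm_real, Real.norm_eq_abs, abs_of_pos h2pos])
    exact le_trans (norm_nonneg _) h
  -- abs on spheres
  have habsρ : ∀ z ∈ sphere (0:ℂ) ρ, ‖z‖ = ρ := by
    intro z hz
    simpa using mem_sphere_zero_iff_norm.1 hz
  have habs2 : ∀ z ∈ sphere (0:ℂ) r₂, ‖z‖ = r₂ := by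
    intro z hz
    simpa using mem_sphere_zero_iff_norm.1 hz
  -- Cauchy difference formula for fp
  have h_fp : (∮ z in C(0, ρ), ((z - w)⁻¹ - z⁻¹) * fp z)
      = (2 * π * Complex.I) * fp w := by
    rw [cauchy_diff hρ0 hρ2 hfp hwρ, hfp0, sub_zero]
  -- constant part
  have h_a : (∮ z in C(0, ρ), ((z - w)⁻¹ - z⁻¹) * a₀) = 0 := by
    have h := cauchy_diff (g := fun _ => a₀) (r := r₂) hρ0 hρ2
      (differentiableOn_const _) hwρ
    simpa using h
  -- exterior part
  have h_fm : (∮ z in C(0, ρ), ((z - w)⁻¹ - z⁻¹) * fm z) = 0 :=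
    ext_zero hR (hRr.trans hρ1) hwρ hfm hfm0
  -- continuity of the kernel and pieces on the sphere of radius ρ
  have hKcont : ContinuousOn (fun z : ℂ => (z - w)⁻¹ - z⁻¹) (sphere 0 ρ) := by
    refine ContinuousOn.sub (ContinuousOn.inv₀
      (continuousOn_id.sub continuousOn_const) ?_)
      (ContinuousOn.inv₀ continuousOn_id ?_)
    · intro z hz
      refine sub_ne_zero.2 fun h => ?_
      rw [h] at hz
      exact absurd (habsρ w hz) (ne_of_lt hwρ)
    · intro z hz h
      rw [h] at hz
      have h4 := habsρ 0 hz
      rw [norm_zero] at h4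
      exact absurd h4.symm (ne_of_gt hρ0)
  have hfpc : ContinuousOn fp (sphere 0 ρ) := by
    refine hfp.continuousOn.mono fun z hz => ?_
    rw [mem_ball_zero_iff, habsρ z hz]
    exact hρ2
  have hfmc : ContinuousOn fm (sphere 0 ρ) := by
    refine hfm.continuousOn.mono fun z hz => ?_
    show R < ‖z‖
    rw [habsρ z hz]
    exact hRr.trans hρ1
  have hfc : ContinuousOn f (sphere 0 ρ) := by
    refine hf.continuousOn.mono fun z hz => ?_
    refine ⟨?_, ?_⟩ <;> rw [habsρ z hz]
    · exact hRr.trans hρ1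
    · exact hρ2.trans h2lt1
  have hintf : CircleIntegrable (fun z : ℂ => ((z - w)⁻¹ - z⁻¹) * f z) 0 ρ :=
    ContinuousOn.circleIntegrable hρ0.le (hKcont.mul hfc)
  have hinta : CircleIntegrable (fun z : ℂ => ((z - w)⁻¹ - z⁻¹) * a₀) 0 ρ :=
    ContinuousOn.circleIntegrable hρ0.le (hKcont.mul continuousOn_const)
  have hintm : CircleIntegrable (fun z : ℂ => ((z - w)⁻¹ - z⁻¹) * fm z) 0 ρ :=
    ContinuousOn.circleIntegrable hρ0.le (hKcont.mul hfmc)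
  have hintfa : CircleIntegrable
      (fun z : ℂ => ((z - w)⁻¹ - z⁻¹) * f z - ((z - w)⁻¹ - z⁻¹) * a₀) 0 ρ :=
    ContinuousOn.circleIntegrable hρ0.le
      ((hKcont.mul hfc).sub (hKcont.mul continuousOn_const))
  -- decomposition on the sphere
  have hEq : Set.EqOn (fun z : ℂ => ((z - w)⁻¹ - z⁻¹) * fp z)
      (fun z : ℂ => (((z - w)⁻¹ - z⁻¹) * f z - ((z - w)⁻¹ - z⁻¹) * a₀)
        - ((z - w)⁻¹ - z⁻¹) * fm z) (sphere 0 ρ) := by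
    intro z hz
    have h1 : R < ‖z‖ := by rw [habsρ z hz]; exact hRr.trans hρ1
    have h2 : ‖z‖ < r₂ := by rw [habsρ z hz]; exact hρ2
    simp only
    rw [hdec z h1 h2]
    ring
  have key1 : (∮ z in C(0, ρ), ((z - w)⁻¹ - z⁻¹) * fp z)
      = ∮ z in C(0, ρ), ((z - w)⁻¹ - z⁻¹) * f z := by
    rw [circleIntegral.integral_congr hρ0.le hEq,
      circleIntegral.integral_sub hintfa hintm,
      circleIntegral.integral_sub hintf hinta, h_a, h_fm]
    ring
  -- move the circle from ρ to r₂
  set U₂ : Set ℂ := {z : ℂ | r₁ < ‖z‖ ∧ ‖z‖ < 1} with hU₂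
  have hU₂open : IsOpen U₂ := by
    rw [hU₂, Set.setOf_and]
    exact (isOpen_lt continuous_const continuous_norm).inter
      (isOpen_lt continuous_norm continuous_const)
  have hKf : DifferentiableOn ℂ (fun z : ℂ => ((z - w)⁻¹ - z⁻¹) * f z) U₂ := by
    have h1 : ∀ z ∈ U₂, z - w ≠ 0 := by
      intro z hz h
      rw [sub_eq_zero] at h
      have h5 : r₁ < ‖z‖ := hz.1
      rw [h] at h5
      exact absurd hw (not_le.2 h5)
    have h2 : ∀ z ∈ U₂, z ≠ 0 := by
      intro z hz h
      have h5 : r₁ < ‖z‖ := hz.1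
      rw [h, norm_zero] at h5
      exact absurd h5 (not_lt.2 h1pos.le)
    refine DifferentiableOn.mul ?_ (hf.mono fun z hz => ⟨hRr.trans hz.1, hz.2⟩)
    exact ((differentiableOn_id.sub (differentiableOn_const w)).inv h1).sub
      (differentiableOn_id.inv h2)
  have hmemU₂ : ∀ z : ℂ, ρ ≤ ‖z‖ → ‖z‖ ≤ r₂ → z ∈ U₂ :=
    fun z hz1 hz2 => ⟨hρ1.trans_le hz1, lt_of_le_of_lt hz2 h2lt1⟩
  have hmove : (∮ z in C(0, r₂), ((z - w)⁻¹ - z⁻¹) * f z)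
      = ∮ z in C(0, ρ), ((z - w)⁻¹ - z⁻¹) * f z := by
    refine Complex.circleIntegral_eq_of_differentiable_on_annulus_off_countable hρ0 hρ2.le
      Set.countable_empty (hKf.continuousOn.mono ?_) (fun z hz => ?_)
    · intro z hz
      have ha1 := hz.1
      have ha2 := hz.2
      rw [mem_closedBall_zero_iff] at ha1
      rw [mem_ball_zero_iff, not_lt] at ha2
      exact hmemU₂ z ha2 ha1
    · have ha1 := hz.1.1
      have ha2 := hz.1.2
      rw [mem_ball_zero_iff] at ha1
      rw [mem_closedBall_zero_iff, not_le] at ha2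
      exact hKf.differentiableAt (hU₂open.mem_nhds (hmemU₂ z ha2.le ha1.le))
  have key : (2 * π * Complex.I) * fp w
      = ∮ z in C(0, r₂), ((z - w)⁻¹ - z⁻¹) * f z := by
    rw [hmove, ← key1, h_fp]
  -- estimate on the circle of radius r₂
  have hb : ∀ z ∈ sphere (0:ℂ) r₂,
      ‖((z - w)⁻¹ - z⁻¹) * f z‖ ≤ ‖w‖ / ((r₂ - r₁) * r₂) * M := by
    intro z hz
    have hzS : ‖z‖ = r₂ := habs2 z hz
    have hz0 : z ≠ 0 := by
      intro h; rw [h, norm_zero] at hzS; exact absurd hzS.symm (ne_of_gt h2pos)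
    have hzw : z ≠ w := by
      intro h
      rw [← h, hzS] at hw
      exact absurd hw (not_le.2 h12)
    have hzw1 : r₂ - r₁ ≤ ‖z - w‖ := by
      have h5 := norm_sub_norm_le z w
      rw [hzS] at h5
      linarith
    rw [norm_mul, kernel_abs hz0 hzw, hzS]
    have hK1 : ‖w‖ / (‖z - w‖ * r₂)
        ≤ ‖w‖ / ((r₂ - r₁) * r₂) := by
      refine div_le_div_of_nonneg_left (norm_nonneg w)
        (mul_pos (by linarith : (0:ℝ) < r₂ - r₁) h2pos) ?_
      exact mul_le_mul_of_nonneg_right hzw1 h2pos.le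
    exact mul_le_mul hK1 (hM z hzS) (norm_nonneg _)
      (div_nonneg (norm_nonneg w)
        (mul_pos (by linarith : (0:ℝ) < r₂ - r₁) h2pos).le)
  have hIb := circleIntegral.norm_integral_le_of_norm_le_const h2pos.le hb
  have hL : ‖2 * (π:ℂ) * Complex.I * fp w‖ = 2 * π * ‖fp w‖ := by
    rw [norm_mul, norm_mul, norm_mul, Complex.norm_two, Complex.norm_I, mul_one,
      Complex.norm_real, Real.norm_eq_abs, abs_of_pos hpi]
  rw [← key, hL] at hIb
  -- conclude
  have hfinal : ‖fp w‖
      ≤ r₂ * (‖w‖ / ((r₂ - r₁) * r₂) * M) := by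
    nlinarith [hIb, hpi, norm_nonneg (fp w)]
  refine hfinal.trans (le_of_eq ?_)
  have hne1 : r₂ - r₁ ≠ 0 := by linarith
  have hne2 : r₂ ≠ 0 := ne_of_gt h2pos
  field_simp
end
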